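/- arXiv:math/0312179 — 3 statements merged into one kernel-verified Lean document; each statement's English description precedes it below -/
import Mathlib

section
/- Let ξ be a rational number with ξ ≥ 10/3. Suppose that for every integer m ≥ 4, if (m - 1 - 1/11 - 12/5)·ξ > 1 then m·ξ ≥ 12 + ⌈(m - 1 - 1/11 - 12/5)·ξ⌉. Then ξ ≥ 11/3. -/
/-- Arithmetic iteration for the case `K_{S_0}^2 ≥ 2`: with `p = 11`, `β = 5/12`,
`2g(C) - 2 = 12`. If `ξ ≥ 10/3` and for every integer `m ≥ 4` with
`(m - 1 - 1/11 - 12/5)·ξ > 1` one has `m·ξ ≥ 12 + ⌈(m - 1 - 1/11 - 12/5)·ξ⌉`,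
then `ξ ≥ 11/3`. -/
theorem stmt1 (ξ : ℚ) (hξ : ξ ≥ 10 / 3)
    (h : ∀ m : ℤ, m ≥ 4 →
      ((m : ℚ) - 1 - 1 / 11 - 12 / 5) * ξ > 1 →
      (m : ℚ) * ξ ≥ 12 + (⌈((m : ℚ) - 1 - 1 / 11 - 12 / 5) * ξ⌉ : ℚ)) :
    ξ ≥ 11 / 3 := by
  -- m = 4 : get ξ ≥ 7/2
  have h4 := h 4 (by norm_num) (by push_cast; nlinarith)
  have c4 : (1 : ℤ) < ⌈(((4:ℤ) : ℚ) - 1 - 1 / 11 - 12 / 5) * ξ⌉ := by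
    rw [Int.lt_ceil]; push_cast; nlinarith
  have hc4 : ((⌈(((4:ℤ) : ℚ) - 1 - 1 / 11 - 12 / 5) * ξ⌉ : ℚ)) ≥ 2 := by
    exact_mod_cast c4
  have hξ2 : ξ ≥ 7 / 2 := by push_cast at h4; nlinarith
  -- m = 5 : get ξ ≥ 18/5
  have h5 := h 5 (by norm_num) (by push_cast; nlinarith)
  have c5 : (5 : ℤ) < ⌈(((5:ℤ) : ℚ) - 1 - 1 / 11 - 12 / 5) * ξ⌉ := by
    rw [Int.lt_ceil]; push_cast; nlinarith
  have hc5 : ((⌈(((5:ℤ) : ℚ) - 1 - 1 / 11 - 12 / 5) * ξ⌉ : ℚ)) ≥ 6 := by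
    exact_mod_cast c5
  have hξ3 : ξ ≥ 18 / 5 := by push_cast at h5; nlinarith
  -- m = 6 : get ξ ≥ 11/3
  have h6 := h 6 (by norm_num) (by push_cast; nlinarith)
  have c6 : (9 : ℤ) < ⌈(((6:ℤ) : ℚ) - 1 - 1 / 11 - 12 / 5) * ξ⌉ := by
    rw [Int.lt_ceil]; push_cast; nlinarith
  have hc6 : ((⌈(((6:ℤ) : ℚ) - 1 - 1 / 11 - 12 / 5) * ξ⌉ : ℚ)) ≥ 10 := by
    exact_mod_cast c6
  push_cast at h6; nlinarith
end

section
/- Let ξ be a rational number with ξ ≥ 8/5. Suppose that for every integer m ≥ 5, if (m - 1 - 1/12 - 5/2)·ξ > 1 then m·ξ ≥ 6 + ⌈(m - 1 - 1/12 - 5/2)·ξ⌉. Then ξ ≥ 13/7. -/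
/-- Arithmetic iteration for the case `(K_{S_0}^2, p_g(S)) = (1,1)`: with `p ≥ 12`,
`β = 2/5`, `2g(C) - 2 = 6`. If `ξ ≥ 8/5` and for every integer `m ≥ 5` with
`(m - 1 - 1/12 - 5/2)·ξ > 1` one has `m·ξ ≥ 6 + ⌈(m - 1 - 1/12 - 5/2)·ξ⌉`,
then `ξ ≥ 13/7`. -/
theorem stmt2 (ξ : ℚ) (hξ : ξ ≥ 8 / 5)
    (h : ∀ m : ℤ, m ≥ 5 →
      ((m : ℚ) - 1 - 1 / 12 - 5 / 2) * ξ > 1 →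
      (m : ℚ) * ξ ≥ 6 + (⌈((m : ℚ) - 1 - 1 / 12 - 5 / 2) * ξ⌉ : ℚ)) :
    ξ ≥ 13 / 7 := by
  have h5 := h 5 (by norm_num) (by push_cast; nlinarith)
  have c5 : (3 : ℤ) ≤ ⌈(((5:ℤ) : ℚ) - 1 - 1 / 12 - 5 / 2) * ξ⌉ := by
    have : ((2:ℤ) : ℚ) < (((5:ℤ) : ℚ) - 1 - 1 / 12 - 5 / 2) * ξ := by push_cast; nlinarith
    exact Int.lt_ceil.mpr this
  have c5' : ((3:ℤ) : ℚ) ≤ (⌈(((5:ℤ) : ℚ) - 1 - 1 / 12 - 5 / 2) * ξ⌉ : ℚ) :=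
    Int.cast_le.mpr c5
  have hξ2 : ξ ≥ 9 / 5 := by push_cast at h5 c5' ⊢; linarith
  have h6 := h 6 (by norm_num) (by push_cast; nlinarith)
  have c6 : (5 : ℤ) ≤ ⌈(((6:ℤ) : ℚ) - 1 - 1 / 12 - 5 / 2) * ξ⌉ := by
    have : ((4:ℤ) : ℚ) < (((6:ℤ) : ℚ) - 1 - 1 / 12 - 5 / 2) * ξ := by push_cast; nlinarith
    exact Int.lt_ceil.mpr this
  have c6' : ((5:ℤ) : ℚ) ≤ (⌈(((6:ℤ) : ℚ) - 1 - 1 / 12 - 5 / 2) * ξ⌉ : ℚ) :=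
    Int.cast_le.mpr c6
  have hξ3 : ξ ≥ 11 / 6 := by push_cast at h6 c6' ⊢; linarith
  have h7 := h 7 (by norm_num) (by push_cast; nlinarith)
  have c7 : (7 : ℤ) ≤ ⌈(((7:ℤ) : ℚ) - 1 - 1 / 12 - 5 / 2) * ξ⌉ := by
    have : ((6:ℤ) : ℚ) < (((7:ℤ) : ℚ) - 1 - 1 / 12 - 5 / 2) * ξ := by push_cast; nlinarith
    exact Int.lt_ceil.mpr this
  have c7' : ((7:ℤ) : ℚ) ≤ (⌈(((7:ℤ) : ℚ) - 1 - 1 / 12 - 5 / 2) * ξ⌉ : ℚ) :=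
    Int.cast_le.mpr c7
  push_cast at h7 c7' ⊢
  linarith
end

section
/- Let L be a free ℤ-module with basis e_C, e_1, e_1', e_2, e_2', e_3, e_3' and symmetric bilinear form determined by: ⟨e_3,e_3⟩ = ⟨e_3',e_3'⟩ = −1, and the conditions ⟨D, v⟩ = 0 for every exceptional basis vector v ∈ {e_1, e_1', e_2, e_2', e_3, e_3'} and ⟨D, e_C⟩ = 1, where D = e_C + 6e_3 + 6e_3' + 3e_2 + 3e_2' + 2e_1 + 2e_1', and the incidence structure is: e_C meets e_3 and e_3' (each with multiplicity to be determined), e_1 meets only e_3, e_2 meets only e_3, e_1' meets only e_3', e_2' meets only e_3', with all other pairs of distinct basis vectors orthogonal and all off-diagonal pairings nonnegative. Then necessarily ⟨e_1,e_1⟩ = ⟨e_1',e_1'⟩ = −3, ⟨e_2,e_2⟩ = ⟨e_2',e_2'⟩ = −2, ⟨e_C,e_C⟩ = −11, and ⟨e_C,e_3⟩ = ⟨e_C,e_3'⟩ = ⟨e_1,e_3⟩ = ⟨e_2,e_3⟩ = ⟨e_1',e_3'⟩ = ⟨e_2',e_3'⟩ = 1. Moreover, defining K(v) = −2 − ⟨v,v⟩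 on basis vectors (adjunction for rational curves), and setting D_0 equal to the sum of all seven basis vectors and A = D_0 + e_3 + e_3', one has K(A) + ⟨A,A⟩ = 2. -/
set_option maxHeartbeats 1000000


/-- Standard basis vectors of the rank-7 lattice; index `0` is `e_C`, `1` is `e₁`,
`2` is `e₁'`, `3` is `e₂`, `4` is `e₂'`, `5` is `e₃`, `6` is `e₃'`. -/
def e7 (i : Fin 7) : Fin 7 → ℤ := Pi.single i 1

/-- The divisor `D = e_C + 6e₃ + 6e₃' + 3e₂ + 3e₂' + 2e₁ + 2e₁'`. -/
def D11 : Fin 7 → ℤ := e7 0 + 6 • e7 5 + 6 • e7 6 + 3 • e7 3 + 3 • e7 4 + 2 • e7 1 + 2 • e7 2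

/-- The reduced divisor `D₀`, the sum of all seven basis vectors. -/
def D011 : Fin 7 → ℤ := e7 0 + e7 1 + e7 2 + e7 3 + e7 4 + e7 5 + e7 6

/-- `A = D₀ + e₃ + e₃'`. -/
def A11 : Fin 7 → ℤ := D011 + e7 5 + e7 6

/-- Intersection-theoretic computation for the Type B/B') embedded resolution. -/
theorem stmt11 (B : (Fin 7 → ℤ) →ₗ[ℤ] (Fin 7 → ℤ) →ₗ[ℤ] ℤ)
    (hsymm : ∀ v w, B v w = B w v)
    -- the two `(-1)`-curves
    (h55 : B (e7 5) (e7 5) = -1) (h66 : B (e7 6) (e7 6) = -1)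
    -- incidence structure: `e_C` meets `e₃` and `e₃'`; `e₁`, `e₂` meet only `e₃`;
    -- `e₁'`, `e₂'` meet only `e₃'`; multiplicities positive but to be determined
    (hC5 : B (e7 0) (e7 5) ≥ 1) (hC6 : B (e7 0) (e7 6) ≥ 1)
    (h15 : B (e7 1) (e7 5) ≥ 1) (h35 : B (e7 3) (e7 5) ≥ 1)
    (h26 : B (e7 2) (e7 6) ≥ 1) (h46 : B (e7 4) (e7 6) ≥ 1)
    -- all other pairs of distinct basis vectors are orthogonal
    (horth : ∀ i j : Fin 7, i ≠ j →
      (i, j) ∉ ({(0,5), (5,0), (0,6), (6,0), (1,5), (5,1), (3,5), (5,3),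
        (2,6), (6,2), (4,6), (6,4)} : Set (Fin 7 × Fin 7)) → B (e7 i) (e7 j) = 0)
    -- `D` is orthogonal to the exceptional vectors and `⟨D, e_C⟩ = 1`
    (hDexc : ∀ i : Fin 7, i ≠ 0 → B D11 (e7 i) = 0)
    (hDC : B D11 (e7 0) = 1)
    -- adjunction for rational curves
    (K : (Fin 7 → ℤ) →ₗ[ℤ] ℤ)
    (hK : ∀ i : Fin 7, K (e7 i) = -2 - B (e7 i) (e7 i)) :
    B (e7 1) (e7 1) = -3 ∧ B (e7 2) (e7 2) = -3 ∧
    B (e7 3) (e7 3) = -2 ∧ B (e7 4) (e7 4) = -2 ∧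
    B (e7 0) (e7 0) = -11 ∧
    B (e7 0) (e7 5) = 1 ∧ B (e7 0) (e7 6) = 1 ∧
    B (e7 1) (e7 5) = 1 ∧ B (e7 3) (e7 5) = 1 ∧
    B (e7 2) (e7 6) = 1 ∧ B (e7 4) (e7 6) = 1 ∧
    K A11 + B A11 A11 = 2 := by
  
  have z01 : B (e7 0) (e7 1) = 0 := horth 0 1 (by decide) (by simp)
  have z02 : B (e7 0) (e7 2) = 0 := horth 0 2 (by decide) (by simp)
  have z03 : B (e7 0) (e7 3) = 0 := horth 0 3 (by decide) (by simp)
  have z04 : B (e7 0) (e7 4) = 0 := horth 0 4 (by decide) (by simp)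
  have z10 : B (e7 1) (e7 0) = 0 := horth 1 0 (by decide) (by simp)
  have z12 : B (e7 1) (e7 2) = 0 := horth 1 2 (by decide) (by simp)
  have z13 : B (e7 1) (e7 3) = 0 := horth 1 3 (by decide) (by simp)
  have z14 : B (e7 1) (e7 4) = 0 := horth 1 4 (by decide) (by simp)
  have z16 : B (e7 1) (e7 6) = 0 := horth 1 6 (by decide) (by simp)
  have z20 : B (e7 2) (e7 0) = 0 := horth 2 0 (by decide) (by simp)
  have z21 : B (e7 2) (e7 1) = 0 := horth 2 1 (by decide) (by simp)
  have z23 : B (e7 2) (e7 3) = 0 := horth 2 3 (by decide) (by simp)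
  have z24 : B (e7 2) (e7 4) = 0 := horth 2 4 (by decide) (by simp)
  have z25 : B (e7 2) (e7 5) = 0 := horth 2 5 (by decide) (by simp)
  have z30 : B (e7 3) (e7 0) = 0 := horth 3 0 (by decide) (by simp)
  have z31 : B (e7 3) (e7 1) = 0 := horth 3 1 (by decide) (by simp)
  have z32 : B (e7 3) (e7 2) = 0 := horth 3 2 (by decide) (by simp)
  have z34 : B (e7 3) (e7 4) = 0 := horth 3 4 (by decide) (by simp)
  have z36 : B (e7 3) (e7 6) = 0 := horth 3 6 (by decide) (by simp)
  have z40 : B (e7 4) (e7 0) = 0 := horth 4 0 (by decide) (by simp)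
  have z41 : B (e7 4) (e7 1) = 0 := horth 4 1 (by decide) (by simp)
  have z42 : B (e7 4) (e7 2) = 0 := horth 4 2 (by decide) (by simp)
  have z43 : B (e7 4) (e7 3) = 0 := horth 4 3 (by decide) (by simp)
  have z45 : B (e7 4) (e7 5) = 0 := horth 4 5 (by decide) (by simp)
  have z52 : B (e7 5) (e7 2) = 0 := horth 5 2 (by decide) (by simp)
  have z54 : B (e7 5) (e7 4) = 0 := horth 5 4 (by decide) (by simp)
  have z56 : B (e7 5) (e7 6) = 0 := horth 5 6 (by decide) (by simp)
  have z61 : B (e7 6) (e7 1) = 0 := horth 6 1 (by decide) (by simp)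
  have z63 : B (e7 6) (e7 3) = 0 := horth 6 3 (by decide) (by simp)
  have z65 : B (e7 6) (e7 5) = 0 := horth 6 5 (by decide) (by simp)
  have hs05 := hsymm (e7 0) (e7 5)
  have hs06 := hsymm (e7 0) (e7 6)
  have hs15 := hsymm (e7 1) (e7 5)
  have hs35 := hsymm (e7 3) (e7 5)
  have hs26 := hsymm (e7 2) (e7 6)
  have hs46 := hsymm (e7 4) (e7 6)
  have E1 := hDexc 1 (by decide)
  have E2 := hDexc 2 (by decide)
  have E3 := hDexc 3 (by decide)
  have E4 := hDexc 4 (by decide)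
  have E5 := hDexc 5 (by decide)
  have E6 := hDexc 6 (by decide)
  simp only [D11, map_add, map_nsmul, LinearMap.add_apply,
    LinearMap.smul_apply] at E1 E2 E3 E4 E5 E6 hDC
  simp only [nsmul_eq_mul, Nat.cast_ofNat] at E1 E2 E3 E4 E5 E6 hDC
  have v05 : B (e7 0) (e7 5) = 1 := by omega
  have v15 : B (e7 1) (e7 5) = 1 := by omega
  have v35 : B (e7 3) (e7 5) = 1 := by omega
  have v06 : B (e7 0) (e7 6) = 1 := by omega
  have v26 : B (e7 2) (e7 6) = 1 := by omega
  have v46 : B (e7 4) (e7 6) = 1 := by omega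
  have v11 : B (e7 1) (e7 1) = -3 := by omega
  have v22 : B (e7 2) (e7 2) = -3 := by omega
  have v33 : B (e7 3) (e7 3) = -2 := by omega
  have v44 : B (e7 4) (e7 4) = -2 := by omega
  have v00 : B (e7 0) (e7 0) = -11 := by omega
  refine ⟨v11, v22, v33, v44, v00, v05, v06, v15, v35, v26, v46, ?_⟩
  simp only [A11, D011, map_add, LinearMap.add_apply, hK]
  omega
end
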